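/- Soundness of bMDL: every theorem of the Hilbert system bMDL is valid in every Mīmāṃsā model. -/

import Mathlib

/-- Formulas of bMDL: atoms, ⊥, →, □, and dyadic O(·/·). -/
inductive Fm (V : Type) : Type
  | var : V → Fm V
  | bot : Fm V
  | imp : Fm V → Fm V → Fm V
  | box : Fm V → Fm V
  | ob  : Fm V → Fm V → Fm V

namespace Fm
variable {V : Type}
def neg (φ : Fm V) : Fm V := φ.imp .bot
def top : Fm V := (Fm.bot (V := V)).neg
def and (φ ψ : Fm V) : Fm V := (φ.imp ψ.neg).neg
def or  (φ ψ : Fm V) : Fm V := φ.neg.imp ψ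
def iff (φ ψ : Fm V) : Fm V := (φ.imp ψ).and (ψ.imp φ)
end Fm

/-- A Mīmāṃsā model: an m-frame (nonempty W, reflexive transitive R,
neighbourhood map η satisfying conditions (ii)–(v)) with a valuation. -/
structure MModel (V W : Type) where
  ne : Nonempty W
  R : W → W → Prop
  refl : ∀ w, R w w
  trans : ∀ {a b c}, R a b → R b c → R a c
  η : W → Set (Set W × Set W)
  η_sub : ∀ w X Y, (X, Y) ∈ η w → X ⊆ {v | R w v} ∧ Y ⊆ {v | R w v}
  η_mono : ∀ w X Y Z, (X, Z) ∈ η w → X ⊆ Y → Y ⊆ {v | R w v} → (Y, Z) ∈ η w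
  η_nonempty : ∀ w X, ((∅ : Set W), X) ∉ η w
  η_noconflict : ∀ w X Y, (X, Y) ∈ η w → (Xᶜ ∩ {v | R w v}, Y) ∉ η w
  σ : W → Set V

/-- Truth of a formula at a world. -/
def MModel.sat {V W : Type} (M : MModel V W) : W → Fm V → Prop
  | w, .var p => p ∈ M.σ w
  | _, .bot => False
  | w, .imp φ ψ => M.sat w φ → M.sat w ψ
  | w, .box φ => ∀ v, M.R w v → M.sat v φ
  | w, .ob φ ψ =>
      ({v | M.sat v φ} ∩ {v | M.R w v}, {v | M.sat v ψ} ∩ {v | M.R w v}) ∈ M.η w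

/-- Validity in a model: truth at every world. -/
def MModel.valid {V W : Type} (M : MModel V W) (φ : Fm V) : Prop :=
  ∀ w, M.sat w φ

/-- The Hilbert system bMDL: classical propositional logic (over →,⊥),
S4 axioms K, T, 4 for □, deontic axioms (1)–(3), with modus ponens and
necessitation. -/
inductive Prov {V : Type} : Fm V → Prop
  | pl1 (φ ψ : Fm V) : Prov (φ.imp (ψ.imp φ))
  | pl2 (φ ψ χ : Fm V) :
      Prov ((φ.imp (ψ.imp χ)).imp ((φ.imp ψ).imp (φ.imp χ)))
  | dne (φ : Fm V) : Prov (φ.neg.neg.imp φ)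
  | axK (φ ψ : Fm V) :
      Prov ((Fm.box (φ.imp ψ)).imp ((Fm.box φ).imp (Fm.box ψ)))
  | axT (φ : Fm V) : Prov ((Fm.box φ).imp φ)
  | ax4 (φ : Fm V) : Prov ((Fm.box φ).imp (Fm.box (Fm.box φ)))
  | d1 (φ ψ θ : Fm V) :
      Prov (((Fm.box (φ.imp ψ)).and (Fm.ob φ θ)).imp (Fm.ob ψ θ))
  | d2 (φ ψ θ : Fm V) :
      Prov ((Fm.box (ψ.imp φ.neg)).imp ((Fm.ob φ θ).and (Fm.ob ψ θ)).neg)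
  | d3 (φ ψ θ : Fm V) :
      Prov (((Fm.box ((ψ.imp θ).and (θ.imp ψ))).and (Fm.ob φ ψ)).imp (Fm.ob φ θ))
  | mp {φ ψ : Fm V} : Prov (φ.imp ψ) → Prov φ → Prov ψ
  | nec {φ : Fm V} : Prov φ → Prov (Fm.box φ)

/-! Each deontic axiom is valid by the frame condition matching it: (1) by upward closure of `η w`
in the first component, (2) by the no-conflict condition, since `□(ψ → ¬φ)` puts `‖ψ‖ ∩ R[w]`
inside the relative complement of `‖φ‖ ∩ R[w]`, and (3) because `□(ψ ↔ θ)` makes the conditions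
`‖ψ‖ ∩ R[w]` and `‖θ‖ ∩ R[w]` equal. T and 4 are reflexivity and transitivity of `R`. -/

namespace MModel

variable {V W : Type} (M : MModel V W)

/-- The paper's `‖φ‖ ∩ R[w]`. -/
def truthSetAt (w : W) (φ : Fm V) : Set W :=
  {v | M.sat v φ} ∩ {v | M.R w v}

variable {M} {w : W} {φ ψ θ : Fm V}

lemma sat_neg : M.sat w φ.neg ↔ ¬M.sat w φ := Iff.rfl

lemma sat_and : M.sat w (φ.and ψ) ↔ M.sat w φ ∧ M.sat w ψ := by
  simp only [Fm.and, sat_neg, MModel.sat]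
  tauto

lemma sat_ob : M.sat w (.ob φ ψ) ↔ (M.truthSetAt w φ, M.truthSetAt w ψ) ∈ M.η w := Iff.rfl

lemma truthSetAt_subset_accessible : M.truthSetAt w φ ⊆ {v | M.R w v} :=
  Set.inter_subset_right

lemma truthSetAt_mono (h : M.sat w (.box (φ.imp ψ))) :
    M.truthSetAt w φ ⊆ M.truthSetAt w ψ :=
  fun v ⟨hφ, hv⟩ => ⟨h v hv hφ, hv⟩

lemma truthSetAt_eq (h : M.sat w (.box ((φ.imp ψ).and (ψ.imp φ)))) :
    M.truthSetAt w φ = M.truthSetAt w ψ :=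
  (truthSetAt_mono fun v hv => (sat_and.mp (h v hv)).1).antisymm
    (truthSetAt_mono fun v hv => (sat_and.mp (h v hv)).2)

lemma truthSetAt_subset_compl (h : M.sat w (.box (ψ.imp φ.neg))) :
    M.truthSetAt w ψ ⊆ (M.truthSetAt w φ)ᶜ ∩ {v | M.R w v} :=
  fun v ⟨hψ, hv⟩ => ⟨fun hφ => h v hv hψ hφ.1, hv⟩

lemma sat_ob_of_box_imp (hb : M.sat w (.box (φ.imp ψ))) (ho : M.sat w (.ob φ θ)) :
    M.sat w (.ob ψ θ) :=
  M.η_mono w _ _ _ ho (truthSetAt_mono hb) truthSetAt_subset_accessible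

lemma not_sat_ob_of_box_imp_neg (hb : M.sat w (.box (ψ.imp φ.neg)))
    (hφ : M.sat w (.ob φ θ)) : ¬M.sat w (.ob ψ θ) := fun hψ =>
  M.η_noconflict w _ _ hφ <|
    M.η_mono w _ _ _ hψ (truthSetAt_subset_compl hb) Set.inter_subset_right

lemma sat_ob_of_box_iff (hb : M.sat w (.box ((ψ.imp θ).and (θ.imp ψ))))
    (ho : M.sat w (.ob φ ψ)) : M.sat w (.ob φ θ) := by
  rwa [sat_ob, ← truthSetAt_eq hb]

end MModel

open MModel in
/-- Soundness of bMDL: every theorem is valid in every Mīmāṃsā model. -/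
theorem stmt12 {V : Type} {φ : Fm V} (h : Prov φ) :
    ∀ (W : Type) (M : MModel V W), M.valid φ := by
  induction h with
  | pl1 | pl2 | dne => intro W M w; simp only [MModel.sat, Fm.neg]; tauto
  | axK => exact fun W M w himp hφ v hv => himp v hv (hφ v hv)
  | axT => exact fun W M w h => h w (M.refl w)
  | ax4 => exact fun W M w h v hv u hu => h u (M.trans hv hu)
  | d1 => exact fun W M w h => sat_ob_of_box_imp (sat_and.mp h).1 (sat_and.mp h).2
  | d2 =>
    exact fun W M w hb h => not_sat_ob_of_box_imp_neg hb (sat_and.mp h).1 (sat_and.mp h).2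
  | d3 => exact fun W M w h => sat_ob_of_box_iff (sat_and.mp h).1 (sat_and.mp h).2
  | mp _ _ ihImp ihAnte => exact fun W M w => ihImp W M w (ihAnte W M w)
  | nec _ ih => exact fun W M _ v _ => ih W M v
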